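/- Let l, n be positive integers, let C be a binary linear code of length l+n (a linear subspace of F_2^{l+n}), let δ be the minimum Hamming weight of a nonzero codeword of C^⊥, and fix a nonnegative integer m. Let T be the set of all tuples (v_1,...,v_l) ∈ (C^⊥)^l such that for each j the first l coordinates of v_j equal the j-th standard unit vector e_j of F_2^l and |(⋃_{j=1}^l supp(v_j)) \ {1,...,l}| = m, and let Φ : T → sets of {1,...,n} be the map sending (v_1,...,v_l) to {i ∈ {1,...,n} : l+i ∈ ⋃_{j=1}^l supp(v_j)}. Then the number of distinct values of Φ (i.e. the number of access groups of size m arising from such tuples) is at most |T|, and if 2m < 3δ − 2 then Φ is injective, so the number of such access groups equals |T|. -/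

import Mathlib

/-!
Over `F_2` the support of `x + y` is the symmetric difference of the supports of `x` and `y`.
So if `x`, `y` and `x + y` are nonzero words of a code of minimum weight `δ` whose supports
have union `U` and intersection `I`, then `δ ≤ |U| - |I|` and `2δ ≤ |U| + |I|`, whence
`3δ ≤ 2|U|`. Two tuples in `T` with the same access group have, for each `j`, `j`-th members
whose supports both lie in `{j}` together with the common tail support of size `m`; if they
differed, this would give `3δ ≤ 2(m + 1)`.
-/

/-- The dual code of a binary linear code `C ⊆ F_2^N` under the standard inner product. -/
def dualCode {N : ℕ} (C : Submodule (ZMod 2) (Fin N → ZMod 2)) :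
    Submodule (ZMod 2) (Fin N → ZMod 2) where
  carrier := {v | ∀ c ∈ C, ∑ h, v h * c h = 0}
  add_mem' := by
    intro a b ha hb c hc
    simp only [Set.mem_setOf_eq] at *
    simp [Pi.add_apply, add_mul, Finset.sum_add_distrib, ha c hc, hb c hc]
  zero_mem' := by
    intro c hc
    simp
  smul_mem' := by
    intro r a ha c hc
    simp only [Set.mem_setOf_eq] at *
    simp [Pi.smul_apply, smul_eq_mul, mul_assoc, ← Finset.mul_sum, ha c hc]

/-- The minimum Hamming weight of a nonzero codeword of `D`. -/
noncomputable def minWeight {N : ℕ} (D : Submodule (ZMod 2) (Fin N → ZMod 2)) : ℕ :=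
  sInf {w | ∃ c ∈ D, c ≠ 0 ∧ w = hammingNorm c}

open Finset

section Weight

variable {ι : Type*} [Fintype ι] [DecidableEq ι]

theorem hammingNorm_add_add_two_mul_card_inter (x y : ι → ZMod 2) :
    hammingNorm (x + y) + 2 * #(({i | x i ≠ 0} : Finset ι) ∩ ({i | y i ≠ 0} : Finset ι)) =
      hammingNorm x + hammingNorm y := by
  set sx : Finset ι := {i | x i ≠ 0}
  set sy : Finset ι := {i | y i ≠ 0}
  have hsupp : ({i | (x + y) i ≠ 0} : Finset ι) = (sx ∪ sy) \ (sx ∩ sy) := by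
    ext i
    simp only [sx, sy, mem_sdiff, mem_union, mem_inter, mem_filter, mem_univ, true_and,
      Pi.add_apply]
    generalize x i = a, y i = b
    revert a b
    decide
  rw [hammingNorm, hammingNorm, hammingNorm, hsupp,
    ← card_union_add_card_inter, ← card_sdiff_add_card_eq_card inter_subset_union]
  ring

end Weight

theorem minWeight_le_hammingNorm {N : ℕ} {D : Submodule (ZMod 2) (Fin N → ZMod 2)}
    {c : Fin N → ZMod 2} (hc : c ∈ D) (hc0 : c ≠ 0) : minWeight D ≤ hammingNorm c :=
  Nat.sInf_le ⟨c, hc, hc0, rfl⟩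

theorem three_mul_minWeight_le_two_mul_ncard_support_union {N : ℕ}
    {D : Submodule (ZMod 2) (Fin N → ZMod 2)} {x y : Fin N → ZMod 2}
    (hx : x ∈ D) (hy : y ∈ D) (hx0 : x ≠ 0) (hy0 : y ≠ 0) (hxy : x ≠ y) :
    3 * minWeight D ≤ 2 * (Function.support x ∪ Function.support y).ncard := by
  have hsum0 : x + y ≠ 0 := fun h =>
    hxy (funext fun i => CharTwo.add_eq_zero.mp (congrFun h i))
  have hsum := minWeight_le_hammingNorm (D.add_mem hx hy) hsum0
  have hxw := minWeight_le_hammingNorm hx hx0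
  have hyw := minWeight_le_hammingNorm hy hy0
  have hcard := hammingNorm_add_add_two_mul_card_inter x y
  have hunion := card_union_add_card_inter ({i | x i ≠ 0} : Finset (Fin N)) {i | y i ≠ 0}
  have hU : (Function.support x ∪ Function.support y).ncard =
      #(({i | x i ≠ 0} : Finset (Fin N)) ∪ ({i | y i ≠ 0} : Finset (Fin N))) := by
    rw [← Set.ncard_coe_finset]
    congr 1
    ext i
    simp
  rw [hU]
  unfold hammingNorm at *
  omega

section Tuples

variable {l n : ℕ} {R : Type*} [Zero R]

def tailSupport (v : Fin l → Fin (l + n) → R) : Set (Fin (l + n)) :=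
  (⋃ j, {h | v j h ≠ 0}) \ {h | (h : ℕ) < l}

theorem tailSupport_eq_of_access_eq {v w : Fin l → Fin (l + n) → R}
    (hvw : {i : Fin n | Fin.natAdd l i ∈ ⋃ j, {h | v j h ≠ 0}} =
      {i : Fin n | Fin.natAdd l i ∈ ⋃ j, {h | w j h ≠ 0}}) :
    tailSupport v = tailSupport w := by
  ext h
  induction h using Fin.addCases with
  | left a => simp [tailSupport]
  | right i => simpa [tailSupport] using Set.ext_iff.mp hvw i

theorem support_subset_insert_tailSupport [One R] {v : Fin l → Fin (l + n) → R} {j : Fin l}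
    (hv : ∀ j' : Fin l, v j (Fin.castAdd n j') = if j' = j then 1 else 0) :
    Function.support (v j) ⊆ insert (Fin.castAdd n j) (tailSupport v) := by
  intro h hh
  induction h using Fin.addCases with
  | left a =>
    obtain rfl : a = j := by
      by_contra hne
      exact hh (by simp [hv, hne])
    exact Set.mem_insert _ _
  | right i => exact Or.inr ⟨Set.mem_iUnion.mpr ⟨j, hh⟩, by simp⟩

end Tuples

theorem count_access_groups_general
    (l n : ℕ)
    (C : Submodule (ZMod 2) (Fin (l + n) → ZMod 2))
    (δ : ℕ) (hδ : δ = minWeight (dualCode C))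
    (m : ℕ)
    (T : Set (Fin l → Fin (l + n) → ZMod 2))
    (hT : T = {v | (∀ j, v j ∈ dualCode C) ∧
        (∀ j j' : Fin l, v j (Fin.castAdd n j') = if j' = j then 1 else 0) ∧
        ((⋃ j, {h | v j h ≠ 0}) \ {h : Fin (l + n) | (h : ℕ) < l}).ncard = m})
    (Φ : (Fin l → Fin (l + n) → ZMod 2) → Set (Fin n))
    (hΦ : Φ = fun v => {i : Fin n | Fin.natAdd l i ∈ ⋃ j, {h | v j h ≠ 0}}) :
    (Φ '' T).ncard ≤ T.ncard ∧
    (2 * m + 2 < 3 * δ → Set.InjOn Φ T ∧ (Φ '' T).ncard = T.ncard) := by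
  refine ⟨Set.ncard_image_le (Set.toFinite _), fun hδm => ?_⟩
  have hinj : Set.InjOn Φ T := by
    subst hT hΦ
    rintro v ⟨hvD, hvunit, hvm⟩ w ⟨hwD, hwunit, -⟩ hvw
    have htail : tailSupport v = tailSupport w := tailSupport_eq_of_access_eq hvw
    funext j
    by_contra hne
    have hunion : (Function.support (v j) ∪ Function.support (w j)).ncard ≤ m + 1 := by
      refine (Set.ncard_le_ncard (Set.union_subset (support_subset_insert_tailSupport (hvunit j))
        (htail ▸ support_subset_insert_tailSupport (hwunit j)))).trans ?_
      exact (Set.ncard_insert_le _ _).trans (by rw [tailSupport, hvm])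
    have := three_mul_minWeight_le_two_mul_ncard_support_union (hvD j) (hwD j)
      (fun h0 => by simpa [h0] using hvunit j j) (fun h0 => by simpa [h0] using hwunit j j) hne
    omega
  exact ⟨hinj, hinj.ncard_image⟩

/-- Counting content of **Theorem 6**: let `T` be the set of tuples `(v_1, …, v_l)` of dual
codewords whose first `l` coordinates form the standard unit vectors of `F_2^l` and whose
supports cover exactly `m` coordinates beyond the first `l`, and let `Φ` send such a tuple to
the corresponding access group of participants.  Then the number of access groups of size `m`
is at most `|T|`, and if `m < (3/2)δ − 1` (in the integer form `2m + 2 < 3δ`) then `Φ` is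
injective on `T`, so the number of access groups of size `m` equals `|T|`. -/
theorem count_access_groups
    (l n : ℕ) (hl : 0 < l) (hn : 0 < n)
    (C : Submodule (ZMod 2) (Fin (l + n) → ZMod 2))
    (δ : ℕ) (hδ : δ = minWeight (dualCode C))
    (m : ℕ)
    (T : Set (Fin l → Fin (l + n) → ZMod 2))
    (hT : T = {v | (∀ j, v j ∈ dualCode C) ∧
        (∀ j j' : Fin l, v j (Fin.castAdd n j') = if j' = j then 1 else 0) ∧
        ((⋃ j, {h | v j h ≠ 0}) \ {h : Fin (l + n) | (h : ℕ) < l}).ncard = m})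
    (Φ : (Fin l → Fin (l + n) → ZMod 2) → Set (Fin n))
    (hΦ : Φ = fun v => {i : Fin n | Fin.natAdd l i ∈ ⋃ j, {h | v j h ≠ 0}}) :
    (Φ '' T).ncard ≤ T.ncard ∧
    (2 * m + 2 < 3 * δ → Set.InjOn Φ T ∧ (Φ '' T).ncard = T.ncard) :=
  count_access_groups_general l n C δ hδ m T hT Φ hΦ
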